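/- The inverse of the upper bidiagonal matrix U (from the LU factorization of \tilde{L}_{P_n}) has entries (U^{-1})_{ij} = f_{2i-1}/f_{2j+1} for i \le j \le n-1 and (U^{-1})_{in} = f_{2i-1}/f_{2n}, and zero below the diagonal, where f_k is the k-th Fibonacci number. -/

import Mathlib

noncomputable def pathU (n : ℕ) : Matrix (Fin n) (Fin n) ℝ := fun i j =>
  if i = j then
    (if i.1 = 0 then 2
     else if i.1 = n - 1 then (Nat.fib (2 * n) : ℝ) / (Nat.fib (2 * n - 1))
     else (Nat.fib (2 * i.1 + 3) : ℝ) / (Nat.fib (2 * i.1 + 1)))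
  else if j.1 = i.1 + 1 then -1 else 0

noncomputable def pathV (n : ℕ) : Matrix (Fin n) (Fin n) ℝ := fun i j =>
  if i ≤ j then
    (Nat.fib (2 * i.1 + 1) : ℝ) /
      (if j.1 = n - 1 then (Nat.fib (2 * n) : ℝ) else (Nat.fib (2 * j.1 + 3) : ℝ))
  else 0

lemma fibR_ne (m : ℕ) (h : 1 ≤ m) : (Nat.fib m : ℝ) ≠ 0 :=
  Nat.cast_ne_zero.mpr (Nat.fib_pos.mpr h).ne'

lemma pathU_mul_pathV (n : ℕ) (hn : 2 ≤ n) : pathU n * pathV n = 1 := by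
  ext i k
  rw [Matrix.mul_apply]
  by_cases hlast : i.1 = n - 1
  · rw [Fintype.sum_eq_single i (fun j hj => by
      have h1 : i ≠ j := fun h => hj h.symm
      have h2 : j.1 ≠ i.1 + 1 := by have := j.2; omega
      simp [pathU, h1, h2])]
    by_cases hik : i ≤ k
    · have hk : k = i := by
        have := k.2; have := Fin.le_def.mp hik
        exact Fin.ext (by omega)
      subst hk
      have hi0 : k.1 ≠ 0 := by omega
      have h2 : 2 * k.1 + 1 = 2 * n - 1 := by omega
      simp only [pathU, pathV, if_pos rfl, if_pos hlast, if_neg hi0, le_refl, if_pos,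
        Matrix.one_apply_eq, h2]
      rw [div_mul_div_comm, mul_comm, div_self]
      exact mul_ne_zero (fibR_ne _ (by omega)) (fibR_ne _ (by omega))
    · have hk : k ≠ i := fun h => hik (h ▸ le_refl i)
      simp [pathV, hik, Matrix.one_apply_ne' hk]
  · have hi1 : i.1 + 1 < n := by have := i.2; omega
    set i' : Fin n := ⟨i.1 + 1, hi1⟩ with hi'
    have hne : i ≠ i' := by simp [hi', Fin.ext_iff]
    rw [Fintype.sum_eq_add i i' hne (fun j hj => by
      have h1 : i ≠ j := fun h => hj.1 h.symm
      have h2 : j.1 ≠ i.1 + 1 := fun h => hj.2 (Fin.ext h)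
      simp [pathU, h1, h2])]
    have hUii' : pathU n i i' = -1 := by simp [pathU, hne, hi', Fin.ext_iff]
    rw [hUii']
    by_cases hik : i ≤ k
    · by_cases hk : k = i
      · subst hk
        have hki' : ¬ i' ≤ k := by simp [hi', Fin.le_def]
        simp only [pathU, pathV, if_pos rfl, if_neg hlast, le_refl, if_pos, if_neg hki',
          Matrix.one_apply_eq, mul_zero, neg_one_mul, neg_zero, add_zero]
        by_cases h0 : k.1 = 0
        · rw [if_pos h0, h0]; norm_num [Nat.fib]
        · rw [if_neg h0]
          rw [div_mul_div_comm, mul_comm, div_self]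
          exact mul_ne_zero (fibR_ne _ (by omega)) (fibR_ne _ (by omega))
      · -- i < k
        have hikk : i.1 < k.1 := by
          have := Fin.le_def.mp hik
          rcases lt_or_eq_of_le this with h | h
          · exact h
          · exact absurd (Fin.ext h.symm) hk
        have hi'k : i' ≤ k := Fin.le_def.mpr (by simp [hi']; omega)
        have hrhs : (1 : Matrix (Fin n) (Fin n) ℝ) i k = 0 :=
          Matrix.one_apply_ne (fun h => hk (Fin.ext (Fin.ext_iff.mp h)).symm)
        simp only [pathU, pathV, if_pos rfl, if_neg hlast, if_pos hik, if_pos hi'k, hrhs,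
          neg_one_mul, hi', ↓reduceIte, if_pos (show (⟨i.1 + 1, hi1⟩ : Fin n) ≤ k from hi'k)]
        set D : ℝ := if k.1 = n - 1 then (Nat.fib (2 * n) : ℝ) else (Nat.fib (2 * k.1 + 3) : ℝ)
          with hD
        have hDne : D ≠ 0 := by
          rw [hD]; split
          · exact fibR_ne _ (by omega)
          · exact fibR_ne _ (by omega)
        have h21 : 2 * (i.1 + 1) + 1 = 2 * i.1 + 3 := by ring
        rw [h21]
        by_cases h0 : i.1 = 0
        · rw [if_pos h0, h0]
          norm_num [Nat.fib]
          rw [div_eq_mul_inv]; ring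
        · rw [if_neg h0]
          have hf1 : (Nat.fib (2 * i.1 + 1) : ℝ) ≠ 0 := fibR_ne _ (by omega)
          field_simp
          ring
    · have hk : k ≠ i := fun h => hik (h ▸ le_refl i)
      have hi'k : ¬ i' ≤ k := by
        intro h
        exact hik (le_trans (Fin.le_def.mpr (by simp [hi'])) h)
      simp [pathV, hik, hi'k, Matrix.one_apply_ne' hk]

theorem pathU_inverse_entries (n : ℕ) (hn : 2 ≤ n) :
    (∀ i j : Fin n, i ≤ j → (j : ℕ) < n - 1 →
      (pathU n)⁻¹ i j = (Nat.fib (2 * i.1 + 1) : ℝ) / (Nat.fib (2 * j.1 + 3))) ∧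
    (∀ i : Fin n,
      (pathU n)⁻¹ i ⟨n - 1, by omega⟩ =
        (Nat.fib (2 * i.1 + 1) : ℝ) / (Nat.fib (2 * n))) ∧
    (∀ i j : Fin n, j < i → (pathU n)⁻¹ i j = 0) := by
  have hinv : (pathU n)⁻¹ = pathV n := Matrix.inv_eq_right_inv (pathU_mul_pathV n hn)
  rw [hinv]
  refine ⟨fun i j hij hj => ?_, fun i => ?_, fun i j hji => ?_⟩
  · simp [pathV, hij, Nat.ne_of_lt hj]
  · have h : i ≤ (⟨n - 1, by omega⟩ : Fin n) := Fin.le_def.mpr (by have := i.2; simp; omega)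
    simp [pathV, h]
  · simp [pathV, not_le.mpr hji]
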